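/- If C is a cap in (ZMod 3)^4 of size 20 consisting of 10 pairs {d_i, d_i'} with a + d_i + d_i' = 0 for a common point a ∉ C, then a ∉ C and for every point p ∉ C ∪ {a} the number of unordered pairs {x,y} ⊆ C with p + x + y = 0 is at least 1. -/

import Mathlib

abbrev V4 := Fin 4 → ZMod 3

def IsCap (C : Set V4) : Prop :=
  ∀ a ∈ C, ∀ b ∈ C, ∀ c ∈ C, a ≠ b → a ≠ c → b ≠ c → a + b + c ≠ 0

/-! Translate the anchor to `0`, so that `C = -C`. If `q ∉ C ∪ {0}` completed no line with a pair
of `C`, then `C` would miss the line `⟨q⟩` and meet each of its cosets at most once, so the union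
`T` of the cosets meeting `C` would have `60` points. As `3 · (81 - 60) < 81`, for `u ∈ C` some `v`
has `v, u + v, u - v ∈ T`. Lifting these to `C` along `⟨q⟩`, and using `C = -C`, one of the four
lines `{u, v, -(u + v)}`, `{v, u - v, -u}`, `{u, u + v, u - v}`, `{v, u + v, -(u - v)}` of the plane
spanned by `u, v` lifts to a line inside `C`, whatever the lifting coefficients are. -/

open Finset Pointwise

theorem exists_mem_add_mem_sub_mem {G : Type*} [AddGroup G] [Fintype G] [DecidableEq G]
    (T : Finset G) (u : G) (hT : 3 * #Tᶜ < Fintype.card G) :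
    ∃ v ∈ T, u + v ∈ T ∧ u - v ∈ T := by
  by_contra! h
  have hcover : (univ : Finset G) ⊆ Tᶜ ∪ Tᶜ.image (-u + ·) ∪ Tᶜ.image (fun w => -w + u) := by
    intro v _
    by_cases hv : v ∈ T
    · by_cases huv : u + v ∈ T
      · exact mem_union_right _ (mem_image.2 ⟨u - v, mem_compl.2 (h v hv huv), by simp⟩)
      · exact mem_union_left _ (mem_union_right _ (mem_image.2 ⟨u + v, mem_compl.2 huv, by simp⟩))
    · exact mem_union_left _ (mem_union_left _ (mem_compl.2 hv))
  have := calc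
    Fintype.card G = #(univ : Finset G) := card_univ.symm
    _ ≤ #(Tᶜ ∪ Tᶜ.image (-u + ·) ∪ Tᶜ.image (fun w => -w + u)) := card_le_card hcover
    _ ≤ #Tᶜ + #(Tᶜ.image (-u + ·)) + #(Tᶜ.image (fun w => -w + u)) :=
      (card_union_le _ _).trans (Nat.add_le_add_right (card_union_le _ _) _)
    _ ≤ 3 * #Tᶜ := by grind [card_image_le]
  omega

section ZModThree

variable {G : Type*} [AddCommGroup G] [Module (ZMod 3) G] {D : Finset G} {q : G}

theorem eq_of_add_add_eq_zero_of_isCap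
    (hcap : ∀ x ∈ D, ∀ y ∈ D, ∀ z ∈ D, x ≠ y → x ≠ z → y ≠ z → x + y + z ≠ 0)
    {x y z : G} (hx : x ∈ D) (hy : y ∈ D) (hz : z ∈ D) (h : x + y + z = 0) : x = y := by
  by_contra hxy
  refine hcap x hx y hy z hz hxy (fun hxz => hxy ?_) (fun hyz => hxy ?_) h
  · subst hxz
    linear_combination (norm := module) -h + ZModModule.char_nsmul_eq_zero 3 x
  · subst hyz
    linear_combination (norm := module) h - ZModModule.char_nsmul_eq_zero 3 y

theorem smul_notMem_of_add_add_ne_zero (hneg : ∀ x ∈ D, -x ∈ D)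
    (hq : ∀ x ∈ D, ∀ y ∈ D, q + x + y ≠ 0) (h0 : (0 : G) ∉ D) (c : ZMod 3) : c • q ∉ D := by
  rcases (by decide : ∀ c : ZMod 3, c = 0 ∨ c = 1 ∨ c = -1) c with rfl | rfl | rfl
  · simpa using h0
  · intro h
    exact hq _ h _ h (by linear_combination (norm := module) ZModModule.char_nsmul_eq_zero 3 q)
  · intro h
    exact hq _ (hneg _ h) _ (hneg _ h)
      (by linear_combination (norm := module) ZModModule.char_nsmul_eq_zero 3 q)

theorem eq_of_add_smul_eq_of_add_add_ne_zero (hneg : ∀ x ∈ D, -x ∈ D)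
    (hq : ∀ x ∈ D, ∀ y ∈ D, q + x + y ≠ 0) {x y : G} (hx : x ∈ D) (hy : y ∈ D) (c : ZMod 3)
    (h : x + c • q = y) : x = y := by
  rcases (by decide : ∀ c : ZMod 3, c = 0 ∨ c = 1 ∨ c = -1) c with rfl | rfl | rfl
  · simpa using h
  · exact (hq x hx _ (hneg y hy) (by linear_combination (norm := module) h)).elim
  · exact (hq _ (hneg x hx) y hy (by linear_combination (norm := module) -h)).elim

theorem exists_ne_add_add_eq_zero_of_plane (hneg : ∀ x ∈ D, -x ∈ D) (hL : ∀ c : ZMod 3, c • q ∉ D)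
    {u v : G} (hu : u ∈ D) (hv : v ∈ D) {b e : ZMod 3} (hb : u + v + b • q ∈ D)
    (he : u - v + e • q ∈ D) : ∃ x ∈ D, ∃ y ∈ D, ∃ z ∈ D, x ≠ y ∧ x + y + z = 0 := by
  rcases (by decide : ∀ b e : ZMod 3, b = 0 ∨ e = 0 ∨ b + e = 0 ∨ b = e) b e
    with rfl | rfl | hbe | rfl
  · refine ⟨u, hu, v, hv, _, hneg _ hb, fun h => hL e ?_, by module⟩
    rwa [h, sub_self, zero_add] at he
  · refine ⟨v, hv, _, he, -u, hneg u hu, fun h => hL b ?_, by module⟩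
    convert hb using 1
    linear_combination (norm := module) h - ZModModule.char_nsmul_eq_zero 3 v
  · refine ⟨u, hu, _, hb, _, he, fun h => hL (-b) ?_, ?_⟩
    · convert hv using 1
      linear_combination (norm := module) h
    · linear_combination (norm := module) hbe • q + ZModModule.char_nsmul_eq_zero 3 u
  · refine ⟨v, hv, _, hb, _, hneg _ he, fun h => hL (-b) ?_, ?_⟩
    · convert hu using 1
      linear_combination (norm := module) h
    · linear_combination (norm := module) ZModModule.char_nsmul_eq_zero 3 v

variable [DecidableEq G]

def zmodSpan (q : G) : Finset G := (univ : Finset (ZMod 3)).image (· • q)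

theorem mem_zmodSpan {w : G} : w ∈ zmodSpan q ↔ ∃ c : ZMod 3, c • q = w := by
  simp [zmodSpan]

theorem card_zmodSpan (hq0 : q ≠ 0) : #(zmodSpan q) = 3 := by
  rw [zmodSpan, card_image_of_injective _ (smul_left_injective (ZMod 3) hq0), card_univ, ZMod.card]

theorem mem_add_zmodSpan {w : G} :
    w ∈ D + zmodSpan q ↔ ∃ c : ZMod 3, w + c • q ∈ D := by
  simp only [mem_add, mem_zmodSpan]
  constructor
  · rintro ⟨x, hx, _, ⟨c, rfl⟩, rfl⟩
    exact ⟨-c, by simpa [add_assoc]⟩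
  · rintro ⟨c, h⟩
    exact ⟨_, h, -c • q, ⟨-c, rfl⟩, by module⟩

theorem card_add_zmodSpan (hneg : ∀ x ∈ D, -x ∈ D) (hq : ∀ x ∈ D, ∀ y ∈ D, q + x + y ≠ 0)
    (hq0 : q ≠ 0) : #(D + zmodSpan q) = 3 * #D := by
  rw [card_add_iff.2, card_zmodSpan hq0, mul_comm]
  rintro ⟨x, _⟩ ⟨hx, hc⟩ ⟨y, _⟩ ⟨hy, he⟩ h
  obtain ⟨c, rfl⟩ := mem_zmodSpan.1 hc
  obtain ⟨e, rfl⟩ := mem_zmodSpan.1 he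
  have hxy : x = y := eq_of_add_smul_eq_of_add_add_ne_zero hneg hq hx hy (c - e) (by
    linear_combination (norm := module) h)
  subst hxy
  simpa using h

theorem exists_ne_add_add_eq_zero_of_neg_mem [Fintype G]
    (hcap : ∀ x ∈ D, ∀ y ∈ D, ∀ z ∈ D, x ≠ y → x ≠ z → y ≠ z → x + y + z ≠ 0)
    (hneg : ∀ x ∈ D, -x ∈ D) (h0 : (0 : G) ∉ D)
    (hcard : 3 * (Fintype.card G - 3 * #D) < Fintype.card G) (hq0 : q ≠ 0) (hqD : q ∉ D) :
    ∃ x ∈ D, ∃ y ∈ D, x ≠ y ∧ q + x + y = 0 := by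
  by_contra! hno
  have hq : ∀ x ∈ D, ∀ y ∈ D, q + x + y ≠ 0 := by
    intro x hx y hy
    rcases eq_or_ne x y with rfl | hxy
    · refine fun h => hqD ?_
      convert hx using 1
      linear_combination (norm := module) h - ZModModule.char_nsmul_eq_zero 3 x
    · exact hno x hx y hy hxy
  obtain ⟨u, hu⟩ : D.Nonempty := by
    rw [← card_pos]
    omega
  obtain ⟨v, hv, hadd, hsub⟩ := exists_mem_add_mem_sub_mem (D + zmodSpan q) u
    (by rwa [card_compl, card_add_zmodSpan hneg hq hq0])
  rw [mem_add_zmodSpan] at hv hadd hsub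
  obtain ⟨c, hc⟩ := hv
  obtain ⟨b, hb⟩ := hadd
  obtain ⟨e, he⟩ := hsub
  obtain ⟨x, hx, y, hy, z, hz, hxy, hsum⟩ :=
    exists_ne_add_add_eq_zero_of_plane hneg (smul_notMem_of_add_add_ne_zero hneg hq h0) hu hc
      (b := b - c) (e := e + c) (by convert hb using 1; module) (by convert he using 1; module)
  exact hxy (eq_of_add_add_eq_zero_of_isCap hcap hx hy hz hsum)

theorem exists_ne_add_add_eq_zero_of_neg_sub_mem [Fintype G] {C : Finset G} {a : G}
    (hcap : ∀ x ∈ C, ∀ y ∈ C, ∀ z ∈ C, x ≠ y → x ≠ z → y ≠ z → x + y + z ≠ 0)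
    (hsymm : ∀ x ∈ C, -a - x ∈ C) (ha : a ∉ C)
    (hcard : 3 * (Fintype.card G - 3 * #C) < Fintype.card G) {p : G} (hp : p ∉ C) (hpa : p ≠ a) :
    ∃ x ∈ C, ∃ y ∈ C, x ≠ y ∧ p + x + y = 0 := by
  set D := C.map (Equiv.subRight a).toEmbedding
  have hD : ∀ x, x ∈ D ↔ x + a ∈ C := by simp [D]
  have h3a := ZModModule.char_nsmul_eq_zero 3 a
  obtain ⟨x, hx, y, hy, hxy, hsum⟩ := exists_ne_add_add_eq_zero_of_neg_mem (D := D) (q := p - a)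
    (fun x hx y hy z hz hxy hxz hyz h => hcap _ ((hD x).1 hx) _ ((hD y).1 hy) _ ((hD z).1 hz)
      (by simpa) (by simpa) (by simpa) (by linear_combination (norm := module) h + h3a))
    (fun x hx => (hD _).2 <| by
      convert hsymm _ ((hD x).1 hx) using 1
      linear_combination (norm := module) h3a)
    (by simpa [hD]) (by rwa [card_map]) (sub_ne_zero.2 hpa) (by simpa [hD])
  exact ⟨x + a, (hD x).1 hx, y + a, (hD y).1 hy, by simpa,
    by linear_combination (norm := module) hsum + h3a⟩

end ZModThree

theorem every_point_completes_a_line (C : Finset V4) (a : V4) (d d' : Fin 10 → V4)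
    (hpair : ∀ i, a + d i + d' i = 0)
    (hC : C = Finset.univ.image d ∪ Finset.univ.image d')
    (hcard : C.card = 20) (hcap : IsCap (↑C : Set V4)) (ha : a ∉ C) :
    a ∉ C ∧ ∀ p : V4, p ∉ C → p ≠ a → ∃ x ∈ C, ∃ y ∈ C, x ≠ y ∧ p + x + y = 0 := by
  have hsymm : ∀ x ∈ C, -a - x ∈ C := by
    subst hC
    simp only [mem_union, mem_image, mem_univ, true_and]
    rintro x (⟨i, rfl⟩ | ⟨i, rfl⟩)
    · exact Or.inr ⟨i, by linear_combination hpair i⟩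
    · exact Or.inl ⟨i, by linear_combination hpair i⟩
  have hcard' : 3 * (Fintype.card V4 - 3 * #C) < Fintype.card V4 := by
    rw [hcard]
    decide
  exact ⟨ha, fun p hp hpa => exists_ne_add_add_eq_zero_of_neg_sub_mem hcap hsymm ha hcard' hp hpa⟩
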